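/- arXiv:1111.4842 — 6 statements merged into one kernel-verified Lean document; each statement's English description precedes it below -/
import Mathlib

section
/- For every positive integer n, the number of integers k with 1 ≤ k ≤ n such that gcd(k, n) is a perfect square equals β(n) = Σ_{d∣n} d·λ(n/d). -/
/-!
Since `∑_{e ∣ m} λ(e)` is `1` when `m` is a perfect square and `0` otherwise, the count
equals `∑_{k ≤ n} ∑_{e ∣ gcd(k, n)} λ(e)`. Exchanging the sums, each divisor `e` of `n`
divides exactly `n / e` of the integers `1 ≤ k ≤ n`, which leaves
`∑_{e ∣ n} λ(e) · n / e = β(n)`.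
-/

/-- The Liouville function `λ(n) = (-1)^Ω(n)`. -/
def lam (n : ℕ) : ℤ := (-1) ^ (ArithmeticFunction.cardFactors n)

/-- The alternating sum-of-divisors function `β(n) = ∑_{d ∣ n} d · λ(n/d)`. -/
def beta (n : ℕ) : ℤ := ∑ d ∈ n.divisors, (d : ℤ) * lam (n / d)

open ArithmeticFunction Finset
open scoped ArithmeticFunction.zeta

theorem Nat.Coprime.isSquare_mul_iff {a b : ℕ} (h : a.Coprime b) :
    IsSquare (a * b) ↔ IsSquare a ∧ IsSquare b := by
  refine ⟨fun ⟨r, hr⟩ => ?_, fun ⟨ha, hb⟩ => ha.mul hb⟩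
  rw [← sq] at hr
  obtain ⟨c, hc⟩ := exists_eq_pow_of_mul_eq_pow (Nat.isUnit_iff.mpr h) hr
  obtain ⟨d, hd⟩ :=
    exists_eq_pow_of_mul_eq_pow (Nat.isUnit_iff.mpr h.symm) ((mul_comm b a).trans hr)
  exact ⟨⟨c, hc.trans (sq c)⟩, ⟨d, hd.trans (sq d)⟩⟩

theorem Nat.Prime.isSquare_pow_iff {p k : ℕ} (hp : p.Prime) : IsSquare (p ^ k) ↔ Even k := by
  refine ⟨fun ⟨r, hr⟩ => ?_, fun hk => hk.isSquare_pow p⟩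
  obtain ⟨j, -, rfl⟩ := (Nat.dvd_prime_pow hp).mp (Dvd.intro r hr.symm)
  exact ⟨j, Nat.pow_right_injective hp.two_le (hr.trans (pow_add p j j).symm)⟩

theorem sum_divisors_liouville {n : ℕ} (hn : n ≠ 0) :
    ∑ d ∈ n.divisors, liouville d = if IsSquare n then 1 else 0 := by
  rw [← coe_mul_zeta_apply]
  induction n using Nat.recOnPosPrimePosCoprime with
  | zero => exact absurd rfl hn
  | one => simp [liouville_apply_one]
  | prime_pow p k hp hk =>
    rw [coe_mul_zeta_apply, Nat.sum_divisors_prime_pow hp]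
    have hpow : ∀ i ∈ range (k + 1), liouville (p ^ i) = (-1) ^ i := fun i _ => by
      rw [liouville_apply (pow_ne_zero i hp.ne_zero), cardFactors_apply_prime_pow hp]
    rw [sum_congr rfl hpow, neg_one_geom_sum]
    by_cases h : Even k <;> simp [h, Nat.even_add_one, hp.isSquare_pow_iff]
  | coprime a b ha hb hab iha ihb =>
    rw [(isMultiplicative_liouville.mul isMultiplicative_zeta.natCast).map_mul_of_coprime hab,
      iha (by omega), ihb (by omega)]
    by_cases h1 : IsSquare a <;> by_cases h2 : IsSquare b <;> simp [h1, h2, hab.isSquare_mul_iff]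

theorem Nat.divisors_gcd_eq_filter {k n : ℕ} (hn : n ≠ 0) :
    (k.gcd n).divisors = {d ∈ n.divisors | d ∣ k} := by
  ext d
  simp [Nat.dvd_gcd_iff, hn, Nat.gcd_eq_zero_iff, and_comm]

theorem sum_Icc_sum_divisors_gcd {R : Type*} [NonAssocSemiring R] (f : ℕ → R) {n : ℕ}
    (hn : n ≠ 0) :
    ∑ k ∈ Icc 1 n, ∑ d ∈ (k.gcd n).divisors, f d = ∑ d ∈ n.divisors, f d * (n / d : ℕ) := by
  simp_rw [Nat.divisors_gcd_eq_filter hn, sum_filter]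
  rw [sum_comm]
  refine sum_congr rfl fun d _ => ?_
  rw [← sum_filter, sum_const, ← Nat.Ioc_filter_dvd_card_eq_div, ← Icc_add_one_left_eq_Ioc,
    zero_add, nsmul_eq_mul']

theorem stmt_0 (n : ℕ) (hn : 0 < n) :
    (((Finset.Icc 1 n).filter fun k => IsSquare (Nat.gcd k n)).card : ℤ) = beta n := by
  have hgcd : ∀ k : ℕ, k.gcd n ≠ 0 := fun k => Nat.gcd_ne_zero_right hn.ne'
  calc (((Icc 1 n).filter fun k => IsSquare (k.gcd n)).card : ℤ)
      = ∑ k ∈ Icc 1 n, ∑ d ∈ (k.gcd n).divisors, liouville d := by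
        simp_rw [natCast_card_filter, sum_divisors_liouville (hgcd _)]
    _ = ∑ d ∈ n.divisors, liouville d * (n / d : ℕ) := sum_Icc_sum_divisors_gcd _ hn.ne'
    _ = beta n := by
        rw [beta, ← Nat.sum_div_divisors n fun d => (d : ℤ) * lam (n / d)]
        refine sum_congr rfl fun d hd => ?_
        rw [Nat.div_div_self (Nat.dvd_of_mem_divisors hd) hn.ne', lam,
          liouville_apply (Nat.pos_of_mem_divisors hd).ne', mul_comm]
end

section
/- For every positive integer n, β(n) = Σ_{d²k = n} φ(k), the sum being over all pairs (d, k) of positive integers with d²k = n, where φ is Euler's totient function. -/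
/-!
In Dirichlet-convolution terms `β = id * λ` and `id = φ * ζ`, so `β = φ * (ζ * λ)`. Both `ζ` and
`λ` are multiplicative, and on a prime power `(ζ * λ)(p ^ k) = ∑_{j ≤ k} (-1) ^ j` is `1` for even
`k` and `0` for odd `k`; hence `ζ * λ` is the indicator of the nonzero squares, and
`(φ * 1_□)(n) = ∑_{d² ∣ n} φ(n / d²)`.
-/

open ArithmeticFunction Finset
open scoped ArithmeticFunction.zeta

theorem isSquare_mul_iff_of_isUnit_gcd {α : Type*} [CommMonoidWithZero α] [GCDMonoid α]
    [Subsingleton αˣ] {a b : α} (h : IsUnit (gcd a b)) :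
    IsSquare (a * b) ↔ IsSquare a ∧ IsSquare b := by
  refine ⟨fun ⟨c, hc⟩ => ?_, fun ⟨ha, hb⟩ => ha.mul hb⟩
  have hab : a * b = c ^ 2 := by rw [hc, sq]
  obtain ⟨x, hx⟩ := exists_eq_pow_of_mul_eq_pow h hab
  obtain ⟨y, hy⟩ := exists_eq_pow_of_mul_eq_pow ((gcd_comm' a b).isUnit_iff.1 h)
    (by rwa [mul_comm] at hab)
  exact ⟨hx ▸ IsSquare.sq x, hy ▸ IsSquare.sq y⟩

theorem lam_eq_liouville {n : ℕ} (hn : n ≠ 0) : lam n = liouville n :=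
  (liouville_apply hn).symm

namespace ArithmeticFunction

section SquareIndicator

variable {R : Type*} [Semiring R]

def squareIndicator : ArithmeticFunction R :=
  ⟨fun n => if n ≠ 0 ∧ IsSquare n then 1 else 0, by simp⟩

theorem squareIndicator_apply {n : ℕ} (hn : n ≠ 0) :
    (squareIndicator n : R) = if IsSquare n then 1 else 0 := by
  simp [squareIndicator, hn]

theorem isMultiplicative_squareIndicator :
    (squareIndicator : ArithmeticFunction R).IsMultiplicative := by
  refine IsMultiplicative.iff_ne_zero.2 ⟨by simp [squareIndicator], fun hm hn hmn => ?_⟩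
  simp only [squareIndicator_apply hm, squareIndicator_apply hn,
    squareIndicator_apply (mul_ne_zero hm hn),
    isSquare_mul_iff_of_isUnit_gcd (Nat.isUnit_iff.2 hmn), ite_zero_mul_ite_zero, mul_one]

theorem mul_squareIndicator_apply (f : ArithmeticFunction R) (n : ℕ) :
    (f * squareIndicator : ArithmeticFunction R) n =
      ∑ d ∈ n.divisors with d ^ 2 ∣ n, f (n / d ^ 2) := by
  have hsquares :
      {m ∈ n.divisors | IsSquare m} = {d ∈ n.divisors | d ^ 2 ∣ n}.image (· ^ 2) := by
    ext m
    simp only [mem_filter, Nat.mem_divisors, mem_image]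
    constructor
    · rintro ⟨⟨hm, hn⟩, d, rfl⟩
      exact ⟨d, ⟨⟨(Dvd.intro d rfl).trans hm, hn⟩, by rwa [sq]⟩, sq d⟩
    · rintro ⟨d, ⟨⟨-, hn⟩, hd⟩, rfl⟩
      exact ⟨⟨hd, hn⟩, IsSquare.sq d⟩
  calc (f * squareIndicator : ArithmeticFunction R) n
      = ∑ m ∈ n.divisors, f (n / m) * squareIndicator m :=
        by rw [mul_apply, Nat.sum_divisorsAntidiagonal' (fun i j => f i * squareIndicator j)]
    _ = ∑ m ∈ n.divisors with IsSquare m, f (n / m) := by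
        rw [sum_filter]
        refine sum_congr rfl fun m hm => ?_
        rw [squareIndicator_apply (Nat.pos_of_mem_divisors hm).ne', mul_ite, mul_one, mul_zero]
    _ = ∑ d ∈ n.divisors with d ^ 2 ∣ n, f (n / d ^ 2) := by
        rw [hsquares, sum_image (Nat.pow_left_injective two_ne_zero).injOn]

end SquareIndicator

theorem coe_zeta_mul_liouville : (ζ : ArithmeticFunction ℤ) * liouville = squareIndicator := by
  refine (IsMultiplicative.eq_iff_eq_on_prime_powers _
    (isMultiplicative_zeta.natCast.mul isMultiplicative_liouville) _
    isMultiplicative_squareIndicator).2 fun p k hp => ?_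
  have hpow : ∀ j, liouville (p ^ j) = (-1) ^ j := fun j => by
    rw [liouville_apply (pow_ne_zero _ hp.ne_zero), cardFactors_apply_prime_pow hp]
  rw [coe_zeta_mul_apply, Nat.sum_divisors_prime_pow hp,
    squareIndicator_apply (pow_ne_zero _ hp.ne_zero)]
  simp only [hpow, neg_one_geom_sum, Nat.even_add_one, hp.isSquare_pow_iff, ite_not]

def totient : ArithmeticFunction ℕ := ⟨Nat.totient, Nat.totient_zero⟩

@[simp]
theorem totient_apply (n : ℕ) : totient n = n.totient := rfl

theorem totient_mul_zeta : totient * ζ = .id := by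
  ext n
  rw [mul_zeta_apply, id_apply]
  exact Nat.sum_totient n

end ArithmeticFunction

theorem beta_eq_id_mul_liouville (n : ℕ) :
    beta n =
      ((ArithmeticFunction.id : ArithmeticFunction ℕ) * liouville : ArithmeticFunction ℤ) n := by
  rw [mul_apply, beta, Nat.sum_divisorsAntidiagonal
    (fun i j => (ArithmeticFunction.id : ArithmeticFunction ℤ) i * liouville j)]
  refine sum_congr rfl fun d hd => ?_
  rw [natCoe_apply, id_apply, lam_eq_liouville]
  exact (Nat.div_pos (Nat.divisor_le hd) (Nat.pos_of_mem_divisors hd)).ne'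

theorem stmt_3_general (n : ℕ) :
    beta n = ∑ d ∈ n.divisors.filter (fun d => d ^ 2 ∣ n), (Nat.totient (n / d ^ 2) : ℤ) := by
  rw [beta_eq_id_mul_liouville, ← totient_mul_zeta, natCoe_mul, mul_assoc, coe_zeta_mul_liouville,
    mul_squareIndicator_apply]
  simp only [natCoe_apply, totient_apply]

theorem stmt_3 (n : ℕ) (hn : 0 < n) :
    beta n = ∑ d ∈ n.divisors.filter (fun d => d ^ 2 ∣ n), (Nat.totient (n / d ^ 2) : ℤ) :=
  stmt_3_general n
end

section
/- For every positive integer n, β(n) is odd if and only if n is a perfect square or twice a perfect square. -/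
open Finset ArithmeticFunction
open scoped ArithmeticFunction.sigma

lemma odd_lam (n : ℕ) : Odd (lam n) :=
  odd_neg_one.pow

lemma odd_beta_iff_odd_sigma_one (n : ℕ) : Odd (beta n) ↔ Odd (σ 1 n) := by
  have hdiff : Even (beta n - σ 1 n) := by
    rw [beta, sigma_one_apply, Nat.cast_sum, ← sum_sub_distrib]
    refine Finset.even_sum _ fun d _ => ?_
    rw [← mul_sub_one]
    exact ((odd_lam _).sub_odd odd_one).mul_left _
  rw [← Int.odd_coe_nat (σ 1 n), ← Int.not_even_iff_odd, ← Int.not_even_iff_odd,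
    Int.even_sub.mp hdiff]

theorem Nat.filter_odd_divisors (n : ℕ) :
    {d ∈ n.divisors | Odd d} = (ordCompl[2] n).divisors := by
  rcases eq_or_ne n 0 with rfl | hn
  · simp
  ext d
  simp only [mem_filter, Nat.mem_divisors, ne_eq, (Nat.ordCompl_pos 2 hn).ne', not_false_eq_true,
    and_true, hn]
  constructor
  · rintro ⟨hd, hodd⟩
    exact Nat.dvd_ordCompl_of_dvd_not_dvd hd (Nat.two_dvd_ne_zero.mpr (Nat.odd_iff.mp hodd))
  · intro hd
    refine ⟨hd.trans (Nat.ordCompl_dvd n 2), Nat.odd_iff.mpr (Nat.two_dvd_ne_zero.mp ?_)⟩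
    exact fun h2 => Nat.not_dvd_ordCompl Nat.prime_two hn (h2.trans hd)

theorem Nat.isSquare_iff_forall_even_factorization {m : ℕ} (hm : m ≠ 0) :
    IsSquare m ↔ ∀ p, Even (m.factorization p) := by
  constructor
  · rintro ⟨t, rfl⟩ p
    have ht : t ≠ 0 := by rintro rfl; simp at hm
    simp [Nat.factorization_mul ht ht]
  · intro h
    rw [← Nat.prod_factorization_pow_eq_self hm]
    refine Finset.isSquare_prod _ fun p _ => ?_
    obtain ⟨c, hc⟩ := h p
    exact ⟨p ^ c, by rw [← pow_add, ← hc]⟩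

theorem Finset.odd_prod_iff {ι : Type*} (s : Finset ι) (f : ι → ℕ) :
    Odd (∏ i ∈ s, f i) ↔ ∀ i ∈ s, Odd (f i) := by
  simp only [← Nat.not_even_iff_odd, even_iff_two_dvd, Nat.prime_two.prime.dvd_finsetProd_iff]
  push Not
  rfl

theorem Nat.odd_card_divisors_iff_isSquare {m : ℕ} (hm : m ≠ 0) :
    Odd #m.divisors ↔ IsSquare m := by
  rw [Nat.card_divisors hm, Finset.odd_prod_iff, Nat.isSquare_iff_forall_even_factorization hm]
  refine forall_congr' fun p => ?_
  by_cases hp : p ∈ m.primeFactors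
  · simp [hp, Nat.odd_add_one]
  · rw [← Nat.support_factorization, Finsupp.notMem_support_iff] at hp
    simp [hp]

lemma odd_sigma_one_iff_isSquare_ordCompl {n : ℕ} (hn : n ≠ 0) :
    Odd (σ 1 n) ↔ IsSquare (ordCompl[2] n) := by
  rw [sigma_one_apply, Finset.odd_sum_iff_odd_card_odd, Nat.filter_odd_divisors,
    Nat.odd_card_divisors_iff_isSquare (Nat.ordCompl_pos 2 hn).ne']

lemma isSquare_ordCompl_two_iff (n : ℕ) :
    IsSquare (ordCompl[2] n) ↔ IsSquare n ∨ ∃ m : ℕ, n = 2 * m ^ 2 := by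
  constructor
  · rintro ⟨t, ht⟩
    have hn : n = 2 ^ n.factorization 2 * (t * t) := by
      rw [← ht, Nat.ordProj_mul_ordCompl_eq_self]
    rcases Nat.even_or_odd' (n.factorization 2) with ⟨j, hj | hj⟩ <;> rw [hj] at hn
    · exact Or.inl ⟨2 ^ j * t, by rw [hn]; ring⟩
    · exact Or.inr ⟨2 ^ j * t, by rw [hn]; ring⟩
  · have hord : ordCompl[2] 2 = 1 := by simp [Nat.Prime.factorization_self Nat.prime_two]
    rintro (⟨t, rfl⟩ | ⟨m, rfl⟩)
    · rw [Nat.ordCompl_mul]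
      exact ⟨_, rfl⟩
    · rw [sq, Nat.ordCompl_mul, Nat.ordCompl_mul, hord, one_mul]
      exact ⟨_, rfl⟩

theorem stmt_7 (n : ℕ) (hn : 0 < n) :
    Odd (beta n) ↔ (IsSquare n ∨ ∃ m : ℕ, n = 2 * m ^ 2) :=
  (odd_beta_iff_odd_sigma_one n).trans <|
    (odd_sigma_one_iff_isSquare_ordCompl hn.ne').trans (isSquare_ordCompl_two_iff n)
end

section
/- For all positive integers n and m, β(n)·β(m) = Σ_{d ∣ gcd(n,m)} β(nm/d²)·d·λ(d). -/
open Finset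

namespace Nat

lemma mem_divisors_div {N k e : ℕ} (hk : k ∣ N) :
    e ∈ (N / k).divisors ↔ k * e ∣ N ∧ N ≠ 0 := by
  rcases eq_or_ne k 0 with rfl | hk0
  · simp [zero_dvd_iff.1 hk]
  rw [mem_divisors, dvd_div_iff_mul_dvd hk, div_ne_zero_iff_of_dvd hk, and_iff_left hk0]

lemma gcd_mul_div_gcd (k x y : ℕ) (h : 0 < gcd x y) :
    gcd (k * x / gcd x y) (k * y / gcd x y) = k := by
  rw [Nat.mul_div_assoc k (gcd_dvd_left x y), Nat.mul_div_assoc k (gcd_dvd_right x y),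
    gcd_mul_left, coprime_div_gcd_div_gcd h, mul_one]

lemma sq_dvd_mul_of_dvd_gcd {n m d : ℕ} (hd : d ∣ gcd n m) : d ^ 2 ∣ n * m := by
  rw [sq]
  exact mul_dvd_mul (hd.trans (gcd_dvd_left n m)) (hd.trans (gcd_dvd_right n m))

def toGcdPair (m : ℕ) (p : ℕ × ℕ) : Σ _ : ℕ, ℕ :=
  ⟨gcd p.1 (m / p.2), p.1 * p.2 / gcd p.1 (m / p.2)⟩

def ofGcdPair (m : ℕ) (q : Σ _ : ℕ, ℕ) : ℕ × ℕ :=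
  (q.1 * q.2 / gcd q.2 (m / q.1), gcd q.2 (m / q.1))

section DivisorPairs

variable {n m : ℕ}

lemma toGcdPair_mem {p : ℕ × ℕ} (hp : p ∈ n.divisors ×ˢ m.divisors) :
    toGcdPair m p ∈ (gcd n m).divisors.sigma fun d ↦ (n * m / d ^ 2).divisors := by
  obtain ⟨a, b⟩ := p
  obtain ⟨⟨ha, hn⟩, hb, hm⟩ := by simpa only [mem_product, mem_divisors] using hp
  set d := gcd a (m / b)
  have hdab : d ^ 2 * (a * b / d) = a * (b * d) := by
    rw [sq, mul_assoc, Nat.mul_div_cancel' ((gcd_dvd_left _ _).trans (dvd_mul_right a b))]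
    ring
  have hdvd : d ^ 2 * (a * b / d) ∣ n * m :=
    hdab ▸ mul_dvd_mul ha (mul_dvd_of_dvd_div hb (gcd_dvd_right _ _))
  refine mem_sigma.2 ⟨mem_divisors.2 ⟨dvd_gcd ((gcd_dvd_left _ _).trans ha)
      ((gcd_dvd_right _ _).trans (div_dvd_of_dvd hb)), gcd_ne_zero_left hn⟩, ?_⟩
  exact (mem_divisors_div ((dvd_mul_right _ _).trans hdvd)).2 ⟨hdvd, mul_ne_zero hn hm⟩

lemma ofGcdPair_mem {q : Σ _ : ℕ, ℕ}
    (hq : q ∈ (gcd n m).divisors.sigma fun d ↦ (n * m / d ^ 2).divisors) :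
    ofGcdPair m q ∈ n.divisors ×ˢ m.divisors := by
  obtain ⟨d, e⟩ := q
  obtain ⟨hd, he⟩ := mem_sigma.1 hq
  replace hd := (mem_divisors.1 hd).1
  obtain ⟨hde, hnm⟩ := (mem_divisors_div (sq_dvd_mul_of_dvd_gcd hd)).1 he
  have hdn := hd.trans (gcd_dvd_left n m)
  have hdm := hd.trans (gcd_dvd_right n m)
  set c := gcd e (m / d)
  have hc : 0 < c := gcd_pos_of_pos_left _ (pos_of_mem_divisors he)
  -- `c * n = gcd (e * n) (m / d * n)`, and `d * e` divides both arguments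
  have hdecn : d * e ∣ c * n := by
    rw [← gcd_mul_right, Nat.div_mul_right_comm hdm, mul_comm m n]
    refine dvd_gcd (by rw [mul_comm e]; exact mul_dvd_mul_right hdn e) (dvd_div_of_mul_dvd ?_)
    rwa [← mul_assoc, ← sq]
  refine mem_product.2 ⟨mem_divisors.2 ⟨?_, left_ne_zero_of_mul hnm⟩,
    mem_divisors.2 ⟨(gcd_dvd_right _ _).trans (div_dvd_of_dvd hdm), right_ne_zero_of_mul hnm⟩⟩
  exact (div_dvd_iff_dvd_mul ((gcd_dvd_left _ _).trans (dvd_mul_left e d)) hc).2 hdecn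

lemma ofGcdPair_toGcdPair {p : ℕ × ℕ} (hp : p ∈ n.divisors ×ˢ m.divisors) :
    ofGcdPair m (toGcdPair m p) = p := by
  obtain ⟨a, b⟩ := p
  obtain ⟨⟨ha, hn⟩, hb, hm⟩ := by simpa only [mem_product, mem_divisors] using hp
  have ha0 : 0 < a := pos_of_ne_zero (ne_zero_of_dvd_ne_zero hn ha)
  have hb0 : 0 < b := pos_of_ne_zero (ne_zero_of_dvd_ne_zero hm hb)
  have hgcd : gcd (a * b / gcd a (m / b)) (m / gcd a (m / b)) = b := by
    have key := gcd_mul_div_gcd b a (m / b) (gcd_pos_of_pos_left _ ha0)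
    rwa [Nat.mul_div_cancel' hb, mul_comm b a] at key
  simp only [toGcdPair, ofGcdPair]
  rw [hgcd, Nat.mul_div_cancel' ((gcd_dvd_left _ _).trans (dvd_mul_right a b)),
    Nat.mul_div_cancel _ hb0]

lemma toGcdPair_ofGcdPair {q : Σ _ : ℕ, ℕ}
    (hq : q ∈ (gcd n m).divisors.sigma fun d ↦ (n * m / d ^ 2).divisors) :
    toGcdPair m (ofGcdPair m q) = q := by
  obtain ⟨d, e⟩ := q
  obtain ⟨hd, he⟩ := mem_sigma.1 hq
  have hdm := (mem_divisors.1 hd).1.trans (gcd_dvd_right n m)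
  have hgcd : gcd (d * e / gcd e (m / d)) (m / gcd e (m / d)) = d := by
    have key := gcd_mul_div_gcd d e (m / d) (gcd_pos_of_pos_left _ (pos_of_mem_divisors he))
    rwa [Nat.mul_div_cancel' hdm] at key
  simp only [toGcdPair, ofGcdPair]
  rw [hgcd, Nat.div_mul_cancel ((gcd_dvd_left _ _).trans (dvd_mul_left e d)),
    Nat.mul_div_cancel_left _ (pos_of_mem_divisors hd)]

end DivisorPairs

theorem sum_divisors_sum_divisors_mul {M : Type*} [AddCommMonoid M] (F : ℕ → M) (n m : ℕ) :
    ∑ a ∈ n.divisors, ∑ b ∈ m.divisors, F (a * b) =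
      ∑ d ∈ (gcd n m).divisors, ∑ e ∈ (n * m / d ^ 2).divisors, F (d * e) := by
  rw [← sum_product', sum_sigma']
  refine sum_nbij' (toGcdPair m) (ofGcdPair m) (fun _ ↦ toGcdPair_mem) (fun _ ↦ ofGcdPair_mem)
    (fun _ ↦ ofGcdPair_toGcdPair) (fun _ ↦ toGcdPair_ofGcdPair) fun p _ ↦ ?_
  rw [toGcdPair, Nat.mul_div_cancel' ((gcd_dvd_left _ _).trans (dvd_mul_right _ _))]

end Nat

section DirichletConv

variable {R : Type*} [CommSemiring R]

def dirichletConv (g h : ℕ → R) (n : ℕ) : R :=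
  ∑ d ∈ n.divisors, g d * h (n / d)

theorem dirichletConv_mul_dirichletConv {g h : ℕ → R}
    (hg : ∀ {a b : ℕ}, a ≠ 0 → b ≠ 0 → g (a * b) = g a * g b)
    (hh : ∀ {a b : ℕ}, a ≠ 0 → b ≠ 0 → h (a * b) = h a * h b) (n m : ℕ) :
    dirichletConv g h n * dirichletConv g h m =
      ∑ d ∈ (n.gcd m).divisors, dirichletConv g h (n * m / d ^ 2) * g d * h d := by
  let F k := g k * h (n * m / k)
  calc dirichletConv g h n * dirichletConv g h m
      = ∑ a ∈ n.divisors, ∑ b ∈ m.divisors, F (a * b) := by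
        rw [dirichletConv, dirichletConv, sum_mul_sum]
        refine sum_congr rfl fun a ha ↦ sum_congr rfl fun b hb ↦ ?_
        obtain ⟨ha, hn⟩ := Nat.mem_divisors.1 ha
        obtain ⟨hb, hm⟩ := Nat.mem_divisors.1 hb
        have ha0 := ne_zero_of_dvd_ne_zero hn ha
        have hb0 := ne_zero_of_dvd_ne_zero hm hb
        dsimp only [F]
        rw [hg ha0 hb0, ← Nat.div_mul_div_comm ha hb,
          hh ((Nat.div_ne_zero_iff_of_dvd ha).2 ⟨hn, ha0⟩)
            ((Nat.div_ne_zero_iff_of_dvd hb).2 ⟨hm, hb0⟩)]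
        ring
    _ = ∑ d ∈ (n.gcd m).divisors, ∑ e ∈ (n * m / d ^ 2).divisors, F (d * e) :=
        Nat.sum_divisors_sum_divisors_mul F n m
    _ = _ := by
        refine sum_congr rfl fun d hd ↦ ?_
        rw [dirichletConv, sum_mul, sum_mul]
        refine sum_congr rfl fun e he ↦ ?_
        have hd0 := Nat.pos_of_mem_divisors hd
        have he0 := Nat.pos_of_mem_divisors he
        obtain ⟨⟨q, hq⟩, hnm⟩ :=
          (Nat.mem_divisors_div (Nat.sq_dvd_mul_of_dvd_gcd (Nat.dvd_of_mem_divisors hd))).1 he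
        have hq0 : q ≠ 0 := right_ne_zero_of_mul (hq ▸ hnm)
        have hquot : n * m / d ^ 2 / e = q := by
          rw [Nat.div_div_eq_div_mul, hq, Nat.mul_div_cancel_left _ (by positivity)]
        have hquot' : n * m / (d * e) = d * q := by
          rw [hq, show d ^ 2 * e * q = d * e * (d * q) by ring,
            Nat.mul_div_cancel_left _ (by positivity)]
        dsimp only [F]
        rw [hquot, hquot', hg hd0.ne' he0.ne', hh hd0.ne' hq0]
        ring

end DirichletConv

lemma lam_mul {a b : ℕ} (ha : a ≠ 0) (hb : b ≠ 0) : lam (a * b) = lam a * lam b := by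
  rw [lam, lam, lam, ArithmeticFunction.cardFactors_mul ha hb, pow_add]

theorem stmt_9_general (n m : ℕ) :
    beta n * beta m =
      ∑ d ∈ (Nat.gcd n m).divisors, beta (n * m / d ^ 2) * (d : ℤ) * lam d :=
  dirichletConv_mul_dirichletConv (fun _ _ ↦ Nat.cast_mul _ _) lam_mul n m

theorem stmt_9 (n m : ℕ) (hn : 0 < n) (hm : 0 < m) :
    beta n * beta m =
      ∑ d ∈ (Nat.gcd n m).divisors, beta (n * m / d ^ 2) * (d : ℤ) * lam d :=
  stmt_9_general n m
end

section
/- The function β is super-multiplicative: for all positive integers n and m, β(nm) ≥ β(n)·β(m). -/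
/-!
β is the Dirichlet convolution `id * λ` of two multiplicative functions, so it is multiplicative
and the inequality reduces to prime powers, where `(p + 1) β(p^k) = p^(k+1) + (-1)^k` is a
geometric sum. This closed form gives `β(p^k) ≥ 0` and
`(p + 1)² (β(p^(a+b)) - β(p^a) β(p^b)) = p (p^a - (-1)^a) (p^b - (-1)^b) ≥ 0`.
-/

open Finset

namespace ArithmeticFunction

theorem IsMultiplicative.eq_prod_of_primeFactors_subset {R : Type*} [CommMonoidWithZero R]
    {f : ArithmeticFunction R} (hf : f.IsMultiplicative) {n : ℕ} (hn : n ≠ 0)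
    {s : Finset ℕ} (hs : n.primeFactors ⊆ s) :
    f n = ∏ p ∈ s, f (p ^ n.factorization p) := by
  rw [hf.multiplicative_factorization f hn]
  exact Finsupp.prod_of_support_subset _ (by rwa [Nat.support_factorization]) _
    fun _ _ => by rw [pow_zero, hf.map_one]

theorem IsMultiplicative.mul_le_map_mul {R : Type*} [CommMonoidWithZero R] [Preorder R]
    [ZeroLEOneClass R] [PosMulMono R] {f : ArithmeticFunction R} (hf : f.IsMultiplicative)
    (hf_nonneg : ∀ p k, p.Prime → 0 ≤ f (p ^ k))
    (hf_pow : ∀ p a b, p.Prime → f (p ^ a) * f (p ^ b) ≤ f (p ^ (a + b)))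
    {m n : ℕ} (hm : m ≠ 0) (hn : n ≠ 0) :
    f m * f n ≤ f (m * n) := by
  have hmn : (m * n).primeFactors = m.primeFactors ∪ n.primeFactors := Nat.primeFactors_mul hm hn
  rw [hf.eq_prod_of_primeFactors_subset hm (hmn ▸ subset_union_left),
    hf.eq_prod_of_primeFactors_subset hn (hmn ▸ subset_union_right),
    hf.eq_prod_of_primeFactors_subset (mul_ne_zero hm hn) subset_rfl, ← prod_mul_distrib]
  refine prod_le_prod (fun p hp => ?_) fun p hp => ?_
  · have hp := Nat.prime_of_mem_primeFactors hp
    exact mul_nonneg (hf_nonneg p _ hp) (hf_nonneg p _ hp)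
  · rw [Nat.factorization_mul hm hn, Finsupp.add_apply]
    exact hf_pow p _ _ (Nat.prime_of_mem_primeFactors hp)

end ArithmeticFunction

open ArithmeticFunction

theorem coe_id_mul_liouville_apply (n : ℕ) :
    ((ArithmeticFunction.id : ArithmeticFunction ℤ) * liouville) n = beta n := by
  rw [mul_apply, Nat.sum_divisorsAntidiagonal fun a b =>
    (ArithmeticFunction.id : ArithmeticFunction ℤ) a * liouville b]
  refine sum_congr rfl fun d hd => ?_
  obtain ⟨hdn, hn⟩ := Nat.mem_divisors.mp hd
  rw [natCoe_apply, id_apply, lam, liouville_apply (Nat.div_ne_zero_iff_of_dvd hdn |>.mpr ⟨hn, ?_⟩)]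
  rintro rfl
  exact hn (Nat.eq_zero_of_zero_dvd hdn)

theorem isMultiplicative_coe_id_mul_liouville :
    ((ArithmeticFunction.id : ArithmeticFunction ℤ) * liouville).IsMultiplicative :=
  isMultiplicative_id.natCast.mul isMultiplicative_liouville

theorem beta_prime_pow_mul {p : ℕ} (hp : p.Prime) (k : ℕ) :
    beta (p ^ k) * (p + 1) = (p : ℤ) ^ (k + 1) + (-1) ^ k := by
  have hsum : beta (p ^ k) = ∑ i ∈ range (k + 1), (p : ℤ) ^ i * (-1) ^ (k + 1 - 1 - i) := by
    rw [beta, Nat.sum_divisors_prime_pow hp]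
    refine sum_congr rfl fun i hi => ?_
    rw [Nat.pow_div (Nat.lt_succ_iff.mp (mem_range.mp hi)) hp.pos, lam,
      cardFactors_apply_prime_pow hp, add_tsub_cancel_right, Nat.cast_pow]
  rw [hsum, show ((p : ℤ) + 1) = p - (-1) by ring, geom_sum₂_mul, pow_succ]
  ring

theorem neg_one_pow_le_pow {R : Type*} [Ring R] [LinearOrder R] [IsStrictOrderedRing R] {x : R}
    (hx : 1 ≤ x) (k : ℕ) : (-1 : R) ^ k ≤ x ^ k := by
  rcases neg_one_pow_eq_or R k with h | h <;> rw [h]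
  · exact one_le_pow₀ hx
  · exact (neg_nonpos.mpr zero_le_one).trans (zero_le_one.trans (one_le_pow₀ hx))

theorem beta_prime_pow_nonneg {p : ℕ} (hp : p.Prime) (k : ℕ) : 0 ≤ beta (p ^ k) := by
  have : 0 ≤ beta (p ^ k) * (p + 1) := by
    rw [beta_prime_pow_mul hp k]
    linarith [neg_one_pow_le_pow (x := (p : ℤ)) (by exact_mod_cast hp.one_le) (k + 1), pow_succ (-1 : ℤ) k]
  exact (mul_nonneg_iff_of_pos_right (by positivity)).mp this

theorem beta_prime_pow_mul_le {p : ℕ} (hp : p.Prime) (a b : ℕ) :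
    beta (p ^ a) * beta (p ^ b) ≤ beta (p ^ (a + b)) := by
  have hfactor (k : ℕ) : (0 : ℤ) ≤ p ^ k - (-1) ^ k :=
    sub_nonneg.mpr (neg_one_pow_le_pow (x := (p : ℤ)) (by exact_mod_cast hp.one_le) k)
  have key : (beta (p ^ (a + b)) - beta (p ^ a) * beta (p ^ b)) * (p + 1) ^ 2
      = p * ((p ^ a - (-1) ^ a) * (p ^ b - (-1) ^ b)) := by
    linear_combination (p + 1 : ℤ) * beta_prime_pow_mul hp (a + b)
      - (p + 1 : ℤ) * beta (p ^ a) * beta_prime_pow_mul hp b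
      - ((p : ℤ) ^ (b + 1) + (-1) ^ b) * beta_prime_pow_mul hp a
  have : 0 ≤ (beta (p ^ (a + b)) - beta (p ^ a) * beta (p ^ b)) * (p + 1) ^ 2 := by
    rw [key]
    exact mul_nonneg (Nat.cast_nonneg p) (mul_nonneg (hfactor a) (hfactor b))
  exact sub_nonneg.mp ((mul_nonneg_iff_of_pos_right (by positivity)).mp this)

theorem stmt_11 (n m : ℕ) (hn : 0 < n) (hm : 0 < m) :
    beta n * beta m ≤ beta (n * m) := by
  simp only [← coe_id_mul_liouville_apply]
  refine isMultiplicative_coe_id_mul_liouville.mul_le_map_mul (fun p k hp => ?_)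
    (fun p a b hp => ?_) hn.ne' hm.ne'
  · simpa only [coe_id_mul_liouville_apply] using beta_prime_pow_nonneg hp k
  · simpa only [coe_id_mul_liouville_apply] using beta_prime_pow_mul_le hp a b
end

section
/- For every composite positive integer n with n ≠ 4, β(n) < n − 1. -/
open ArithmeticFunction
open scoped Nat

namespace ArithmeticFunction.IsMultiplicative

variable {R : Type*} [CommMonoidWithZero R] [PartialOrder R] [ZeroLEOneClass R] [PosMulMono R]
  {f g : ArithmeticFunction R}

theorem nonneg_of_prime_pow (hf : f.IsMultiplicative)
    (h : ∀ p k, p.Prime → 0 ≤ f (p ^ k)) (n : ℕ) : 0 ≤ f n := by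
  rcases eq_or_ne n 0 with rfl | hn
  · simp
  rw [hf.multiplicative_factorization f hn, Finsupp.prod, Nat.support_factorization]
  exact Finset.prod_nonneg fun p hp => h _ _ (Nat.prime_of_mem_primeFactors hp)

theorem le_of_prime_pow (hf : f.IsMultiplicative) (hg : g.IsMultiplicative)
    (h₀ : ∀ p k, p.Prime → 0 ≤ f (p ^ k)) (h : ∀ p k, p.Prime → f (p ^ k) ≤ g (p ^ k))
    (n : ℕ) : f n ≤ g n := by
  rcases eq_or_ne n 0 with rfl | hn
  · simp
  rw [hf.multiplicative_factorization f hn, hg.multiplicative_factorization g hn, Finsupp.prod,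
    Finsupp.prod, Nat.support_factorization]
  exact Finset.prod_le_prod (fun p hp => h₀ _ _ (Nat.prime_of_mem_primeFactors hp))
    fun p hp => h _ _ (Nat.prime_of_mem_primeFactors hp)

end ArithmeticFunction.IsMultiplicative

theorem Nat.two_le_totient {n : ℕ} (hn : 2 < n) : 2 ≤ φ n := by
  obtain ⟨m, hm⟩ := Nat.totient_even hn
  have := Nat.totient_pos.mpr (by omega : 0 < n)
  omega

theorem Nat.exists_prime_pow_succ_mul_coprime {n : ℕ} (hn : 1 < n) :
    ∃ p k c, p.Prime ∧ (p ^ (k + 1)).Coprime c ∧ p ^ (k + 1) * c = n := by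
  have hp := Nat.minFac_prime hn.ne'
  obtain ⟨k, hk⟩ := Nat.exists_eq_add_one_of_ne_zero
    (hp.factorization_pos_of_dvd (by omega) n.minFac_dvd).ne'
  refine ⟨n.minFac, k, n / n.minFac ^ (k + 1), hp, ?_, ?_⟩ <;> rw [← hk]
  · exact (Nat.coprime_ordCompl hp (by omega)).pow_left _
  · exact Nat.ordProj_mul_ordCompl_eq_self n _

def alternatingSigma : ArithmeticFunction ℤ :=
  (ArithmeticFunction.id : ArithmeticFunction ℕ) * liouville

theorem alternatingSigma_apply (n : ℕ) : alternatingSigma n = beta n := by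
  rw [alternatingSigma, mul_apply, beta,
    ← Nat.sum_divisorsAntidiagonal (fun a b => (a : ℤ) * lam b)]
  refine Finset.sum_congr rfl fun x hx => ?_
  simp [liouville_apply (Nat.right_ne_zero_of_mem_divisorsAntidiagonal hx), lam]

theorem isMultiplicative_alternatingSigma : alternatingSigma.IsMultiplicative :=
  isMultiplicative_id.natCast.mul isMultiplicative_liouville

theorem beta_mul_of_coprime {m n : ℕ} (h : m.Coprime n) : beta (m * n) = beta m * beta n := by
  simp only [← alternatingSigma_apply, isMultiplicative_alternatingSigma.map_mul_of_coprime h]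

theorem beta_prime_pow {p : ℕ} (hp : p.Prime) (k : ℕ) :
    beta (p ^ k) = ∑ i ∈ Finset.range (k + 1), (p : ℤ) ^ i * (-1) ^ (k - i) := by
  rw [beta, Nat.sum_divisors_prime_pow hp]
  refine Finset.sum_congr rfl fun i hi => ?_
  rw [Nat.pow_div (Finset.mem_range_succ_iff.mp hi) hp.pos, lam, cardFactors_apply_prime_pow hp]
  push_cast
  rfl

theorem beta_prime_pow_succ {p : ℕ} (hp : p.Prime) (k : ℕ) :
    beta (p ^ (k + 1)) = p ^ (k + 1) - beta (p ^ k) := by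
  have h : ∀ i ∈ Finset.range (k + 1),
      (p : ℤ) ^ i * (-1) ^ (k + 1 - i) = -((p : ℤ) ^ i * (-1) ^ (k - i)) := fun i hi => by
    rw [Nat.sub_add_comm (Finset.mem_range_succ_iff.mp hi), pow_succ]
    ring
  rw [beta_prime_pow hp, beta_prime_pow hp, Finset.sum_range_succ, Finset.sum_congr rfl h,
    Finset.sum_neg_distrib, Nat.sub_self, pow_zero, mul_one, neg_add_eq_sub]

theorem beta_prime_pow_mem_Icc {p : ℕ} (hp : p.Prime) (k : ℕ) :
    beta (p ^ k) ∈ Set.Icc (φ (p ^ k) : ℤ) (p ^ k) := by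
  induction k with
  | zero => simp [beta, lam]
  | succ k ih =>
    have hφ : (φ (p ^ (k + 1)) : ℤ) = p ^ (k + 1) - p ^ k := by
      rw [Nat.totient_prime_pow_succ hp, Nat.cast_mul, Nat.cast_sub hp.one_le]
      push_cast
      ring
    rw [beta_prime_pow_succ hp, hφ]
    constructor <;> linarith [ih.1, ih.2, (φ (p ^ k)).cast_nonneg (α := ℤ)]

theorem beta_prime_pow_succ_le {p : ℕ} (hp : p.Prime) (k : ℕ) :
    beta (p ^ (k + 1)) ≤ p ^ (k + 1) - φ (p ^ k) := by
  rw [beta_prime_pow_succ hp]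
  linarith [(beta_prime_pow_mem_Icc hp k).1]

theorem beta_nonneg (n : ℕ) : 0 ≤ beta n := by
  rw [← alternatingSigma_apply]
  refine isMultiplicative_alternatingSigma.nonneg_of_prime_pow (fun p k hp => ?_) n
  rw [alternatingSigma_apply]
  exact (Nat.cast_nonneg _).trans (beta_prime_pow_mem_Icc hp k).1

theorem beta_le_self (n : ℕ) : beta n ≤ n := by
  simpa [alternatingSigma_apply] using
    isMultiplicative_alternatingSigma.le_of_prime_pow isMultiplicative_id.natCast
      (fun p k _ => by simpa [alternatingSigma_apply] using beta_nonneg (p ^ k))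
      (fun p k hp => by simpa [alternatingSigma_apply] using (beta_prime_pow_mem_Icc hp k).2) n

theorem beta_prime_pow_lt {p k : ℕ} (hp : p.Prime) (hk : 2 ≤ k) (h4 : p ^ k ≠ 4) :
    beta (p ^ k) < (p ^ k : ℕ) - 1 := by
  obtain ⟨j, rfl⟩ := Nat.exists_eq_add_of_le' hk
  have hpj : 2 < p ^ (j + 1) := by
    refine lt_of_le_of_ne (hp.two_le.trans (Nat.le_self_pow j.succ_ne_zero p)) fun h => h4 ?_
    obtain ⟨rfl, hj⟩ := (Nat.Prime.pow_eq_iff Nat.prime_two).mp h.symm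
    obtain rfl : j = 0 := by omega
    rfl
  have hφ : (2 : ℤ) ≤ φ (p ^ (j + 1)) := by exact_mod_cast Nat.two_le_totient hpj
  push_cast
  linarith [beta_prime_pow_succ_le hp (j + 1)]

theorem beta_prime_pow_succ_mul_lt {p k c : ℕ} (hp : p.Prime) (hcop : (p ^ (k + 1)).Coprime c)
    (hc : 2 ≤ c) : beta (p ^ (k + 1) * c) < (p ^ (k + 1) * c : ℕ) - 1 := by
  have hφ : (1 : ℤ) ≤ φ (p ^ k) := by exact_mod_cast Nat.totient_pos.mpr (pow_pos hp.pos k)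
  have hc' : (2 : ℤ) ≤ c := by exact_mod_cast hc
  have hβp := beta_prime_pow_succ_le hp k
  push_cast
  calc beta (p ^ (k + 1) * c) = beta (p ^ (k + 1)) * beta c := beta_mul_of_coprime hcop
    _ ≤ (p ^ (k + 1) - 1) * c :=
      mul_le_mul (by linarith) (beta_le_self c) (beta_nonneg c)
        (by linarith [beta_nonneg (p ^ (k + 1))])
    _ < p ^ (k + 1) * c - 1 := by linarith

theorem stmt_18 (n : ℕ) (hcomp : 1 < n ∧ ¬ n.Prime) (h4 : n ≠ 4) :
    beta n < (n : ℤ) - 1 := by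
  obtain ⟨hn1, hnp⟩ := hcomp
  obtain ⟨p, k, c, hp, hcop, rfl⟩ := Nat.exists_prime_pow_succ_mul_coprime hn1
  obtain rfl | hc : c = 1 ∨ 2 ≤ c := by
    rcases c with _ | _ | c <;> simp_all
  · rw [mul_one] at hnp h4 ⊢
    have hk : k ≠ 0 := by
      rintro rfl
      exact hnp (by simpa using hp)
    exact beta_prime_pow_lt hp (by omega) h4
  · exact beta_prime_pow_succ_mul_lt hp hcop hc
end
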